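/- Let U, V ∈ ℝ^{n×r} have orthonormal columns and satisfy assumption A1 (‖U^i‖² ≤ μ₀r/n and ‖V^j‖² ≤ μ₀r/n for all rows i, j). Let Ω be generated by a d-regular bipartite graph whose biadjacency matrix G satisfies G1 and G2 with constant C. Then for every X ∈ ℝ^{n×r}, ‖(I − UUᵀ)·(n/d)·P_Ω(UXᵀ)·VVᵀ‖_F² ≤ (C²μ₀²r²/d)·‖X‖_F². -/

import Mathlib

open Matrix
open scoped BigOperators

noncomputable section

/-- Euclidean norm of a vector. -/
def vecNorm {β : Type*} [Fintype β] (x : β → ℝ) : ℝ :=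
  Real.sqrt (∑ i, x i ^ 2)

/-- Spectral norm (largest singular value) of a real matrix. -/
def specNorm {α β : Type*} [Fintype α] [Fintype β] (A : Matrix α β ℝ) : ℝ :=
  sSup {c | ∃ x : β → ℝ, vecNorm x ≤ 1 ∧ c = vecNorm (A.mulVec x)}

/-- Second largest singular value of a real matrix (Courant–Fischer characterization). -/
def sigma2 {α β : Type*} [Fintype α] [Fintype β] (A : Matrix α β ℝ) : ℝ :=
  ⨅ v : β → ℝ, sSup {c | ∃ x : β → ℝ,
    vecNorm x ≤ 1 ∧ (∑ i, v i * x i) = 0 ∧ c = vecNorm (A.mulVec x)}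

/-- Frobenius norm. -/
def frobNorm {α β : Type*} [Fintype α] [Fintype β] (A : Matrix α β ℝ) : ℝ :=
  Real.sqrt (∑ i, ∑ j, A i j ^ 2)

/-- Nuclear norm: the sum of the singular values, i.e. the trace of `√(AᵀA)`. -/
def nuclearNorm {α β : Type*} [Fintype α] [Fintype β] [DecidableEq β]
    (A : Matrix α β ℝ) : ℝ :=
  (((Matrix.posSemidef_conjTranspose_mul_self A).1.eigenvectorUnitary : Matrix β β ℝ) *
    Matrix.diagonal ((RCLike.ofReal : ℝ → ℝ) ∘ (Real.sqrt ·) ∘ (Matrix.posSemidef_conjTranspose_mul_self A).1.eigenvalues) *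
    (star (Matrix.posSemidef_conjTranspose_mul_self A).1.eigenvectorUnitary :
      Matrix β β ℝ)).trace

/-- The sampling operator `P_Ω`. -/
def sampl {n : ℕ} (Ω : Finset (Fin n × Fin n)) (M : Matrix (Fin n) (Fin n) ℝ) :
    Matrix (Fin n) (Fin n) ℝ :=
  Matrix.of fun i j => if (i, j) ∈ Ω then M i j else 0

/-- The biadjacency matrix `G` of the bipartite graph with edge set `Ω`. -/
def biadj {n : ℕ} (Ω : Finset (Fin n × Fin n)) : Matrix (Fin n) (Fin n) ℝ :=
  Matrix.of fun i j => if (i, j) ∈ Ω then (1 : ℝ) else 0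

/-- `Ω` is the edge set of a `d`-regular bipartite graph: every row and every column
of `G` has exactly `d` ones. -/
def RegularSampling {n : ℕ} (Ω : Finset (Fin n × Fin n)) (d : ℕ) : Prop :=
  (∀ i : Fin n, (Finset.univ.filter fun j => (i, j) ∈ Ω).card = d) ∧
  (∀ j : Fin n, (Finset.univ.filter fun i => (i, j) ∈ Ω).card = d)

/-- Assumption G1: the all-ones vector is a top left- and right-singular vector of `G`,
with `σ₁(G) = d`. -/
def AssumptionG1 {n : ℕ} (Ω : Finset (Fin n × Fin n)) (d : ℕ) : Prop :=
  specNorm (biadj Ω) = d ∧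
  (biadj Ω).mulVec (fun _ => 1) = (fun _ => (d : ℝ)) ∧
  Matrix.vecMul (fun _ => 1) (biadj Ω) = (fun _ => (d : ℝ))

/-- Assumption G2: `σ₂(G) ≤ C·√d`. -/
def AssumptionG2 {n : ℕ} (Ω : Finset (Fin n × Fin n)) (d : ℕ) (C : ℝ) : Prop :=
  sigma2 (biadj Ω) ≤ C * Real.sqrt d

/-- Assumption A1 (`μ₀`-incoherence) for one factor: every row `U^i` satisfies
`‖U^i‖² ≤ μ₀ r / n`. -/
def IncoherentRows {n r : ℕ} (U : Matrix (Fin n) (Fin r) ℝ) (μ₀ : ℝ) : Prop :=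
  ∀ i : Fin n, (∑ k, U i k ^ 2) ≤ μ₀ * r / n

/-- Assumption A2 (strong incoherence with parameter `δ`) for one factor:
for every `S` with `|S| = d`, `‖(n/d)·∑_{k∈S} U^k (U^k)ᵀ − I‖ ≤ δ`. -/
def StrongIncoherence {n r : ℕ} (U : Matrix (Fin n) (Fin r) ℝ) (d : ℕ) (δ : ℝ) : Prop :=
  ∀ S : Finset (Fin n), S.card = d →
    specNorm (((n : ℝ) / (d : ℝ)) • (∑ k ∈ S, Matrix.vecMulVec (U k) (U k)) - 1) ≤ δ

/-- `M = U · diagonal s · Vᵀ` is a thin SVD of the rank-`r` matrix `M`. -/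
def IsThinSVD {n r : ℕ} (M : Matrix (Fin n) (Fin n) ℝ)
    (U : Matrix (Fin n) (Fin r) ℝ) (s : Fin r → ℝ) (V : Matrix (Fin n) (Fin r) ℝ) : Prop :=
  Uᵀ * U = 1 ∧ Vᵀ * V = 1 ∧ (∀ i, 0 < s i) ∧ M = U * Matrix.diagonal s * Vᵀ

/-- The projection `P_T` onto the subspace `T` spanned by matrices `UXᵀ` and `YVᵀ`. -/
def projT {n r : ℕ} (U V : Matrix (Fin n) (Fin r) ℝ) (Z : Matrix (Fin n) (Fin n) ℝ) :
    Matrix (Fin n) (Fin n) ℝ :=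
  U * Uᵀ * Z + Z * (V * Vᵀ) - U * Uᵀ * Z * (V * Vᵀ)

/-- The projection `P_{T⊥}` onto the orthogonal complement of `T`. -/
def projTperp {n r : ℕ} (U V : Matrix (Fin n) (Fin r) ℝ) (Z : Matrix (Fin n) (Fin n) ℝ) :
    Matrix (Fin n) (Fin n) ℝ :=
  (1 - U * Uᵀ) * Z * (1 - V * Vᵀ)

end

/-!
Write `P_Ω(M) = G ⊙ M` and split `G = (d/n) 𝟙𝟙ᵀ + H`. The rank-one part contributes
`(d/n) U Xᵀ`, which `I - UUᵀ` annihilates, and the two projections only shrink Frobenius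
norms, so it suffices to bound `(n/d) ‖(H ⊙ UXᵀ) V‖_F`. Its `(i, k)` entry is
`∑ₐ U_{ia} (H w_{ak})_i` with `w_{ak} = (X_{ja} V_{jk})_j`; Cauchy–Schwarz, incoherence of `U`
and `V`, and `‖H‖ ≤ σ₂(G)` bound its squared norm by `(μ₀r/n)² σ₂(G)² ‖X‖_F²`, and G2 finishes.
The bound `‖H‖ ≤ σ₂(G)` holds because by G1 the vector `𝟙` is a top singular vector of `G`,
which `H` kills, and by min-max `G` is bounded by `σ₂(G)` on `𝟙⊥`.
-/

open Matrix

section VectorNorms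

variable {α β : Type*} [Fintype α] [Fintype β]

lemma dotProduct_self_nonneg (x : β → ℝ) : 0 ≤ x ⬝ᵥ x :=
  Finset.sum_nonneg fun i _ => mul_self_nonneg (x i)

lemma ones_dotProduct_ones : (fun _ => (1 : ℝ)) ⬝ᵥ (fun _ : β => 1) = Fintype.card β := by
  simp [dotProduct]

lemma vecNorm_eq_sqrt_dotProduct (x : β → ℝ) : vecNorm x = √(x ⬝ᵥ x) := by
  simp only [vecNorm, dotProduct, sq]

lemma vecNorm_nonneg (x : β → ℝ) : 0 ≤ vecNorm x :=
  Real.sqrt_nonneg _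

lemma vecNorm_sq_eq_sum (x : β → ℝ) : vecNorm x ^ 2 = ∑ i, x i ^ 2 :=
  Real.sq_sqrt (by positivity)

lemma vecNorm_sq (x : β → ℝ) : vecNorm x ^ 2 = x ⬝ᵥ x := by
  rw [vecNorm_eq_sqrt_dotProduct, Real.sq_sqrt (dotProduct_self_nonneg x)]

lemma vecNorm_le_vecNorm_iff {x y : β → ℝ} : vecNorm x ≤ vecNorm y ↔ x ⬝ᵥ x ≤ y ⬝ᵥ y := by
  rw [vecNorm_eq_sqrt_dotProduct, vecNorm_eq_sqrt_dotProduct,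
    Real.sqrt_le_sqrt_iff (dotProduct_self_nonneg y)]

lemma vecNorm_smul (c : ℝ) (x : β → ℝ) : vecNorm (c • x) = |c| * vecNorm x := by
  rw [vecNorm_eq_sqrt_dotProduct, vecNorm_eq_sqrt_dotProduct, smul_dotProduct, dotProduct_smul,
    smul_smul, smul_eq_mul, Real.sqrt_mul (mul_self_nonneg c), Real.sqrt_mul_self_eq_abs]

lemma frobNorm_nonneg (A : Matrix α β ℝ) : 0 ≤ frobNorm A :=
  Real.sqrt_nonneg _

lemma vecNorm_mulVec_le_frobNorm_mul (A : Matrix α β ℝ) (x : β → ℝ) :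
    vecNorm (A *ᵥ x) ≤ frobNorm A * vecNorm x := by
  rw [vecNorm, vecNorm, frobNorm, ← Real.sqrt_mul (by positivity), Finset.sum_mul]
  exact Real.sqrt_le_sqrt <| Finset.sum_le_sum fun i _ =>
    Finset.sum_mul_sq_le_sq_mul_sq Finset.univ (A i) x

end VectorNorms

section SingularValues

variable {α β : Type*} [Fintype α] [Fintype β]

noncomputable def normOnOrthogonal (A : Matrix α β ℝ) (v : β → ℝ) : ℝ :=
  sSup {c | ∃ x : β → ℝ, vecNorm x ≤ 1 ∧ (∑ i, v i * x i) = 0 ∧ c = vecNorm (A.mulVec x)}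

lemma sigma2_eq_iInf_normOnOrthogonal (A : Matrix α β ℝ) :
    sigma2 A = ⨅ v, normOnOrthogonal A v :=
  rfl

lemma specNorm_eq_normOnOrthogonal_zero (A : Matrix α β ℝ) :
    specNorm A = normOnOrthogonal A 0 := by
  simp [specNorm, normOnOrthogonal]

lemma vecNorm_mulVec_le_normOnOrthogonal {A : Matrix α β ℝ} {v x : β → ℝ}
    (hx : vecNorm x ≤ 1) (hvx : v ⬝ᵥ x = 0) : vecNorm (A *ᵥ x) ≤ normOnOrthogonal A v := by
  refine le_csSup ⟨frobNorm A, ?_⟩ ⟨x, hx, hvx, rfl⟩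
  rintro _ ⟨y, hy, -, rfl⟩
  exact (vecNorm_mulVec_le_frobNorm_mul A y).trans
    (mul_le_of_le_one_right (frobNorm_nonneg A) hy)

lemma normOnOrthogonal_nonneg (A : Matrix α β ℝ) (v : β → ℝ) : 0 ≤ normOnOrthogonal A v := by
  simpa [vecNorm] using vecNorm_mulVec_le_normOnOrthogonal (A := A) (v := v) (x := 0)
    (by simp [vecNorm]) (dotProduct_zero v)

lemma sigma2_nonneg (A : Matrix α β ℝ) : 0 ≤ sigma2 A :=
  le_ciInf fun v => normOnOrthogonal_nonneg A v

lemma vecNorm_mulVec_le_normOnOrthogonal_mul {A : Matrix α β ℝ} {v x : β → ℝ}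
    (hvx : v ⬝ᵥ x = 0) : vecNorm (A *ᵥ x) ≤ normOnOrthogonal A v * vecNorm x := by
  rcases (vecNorm_nonneg x).eq_or_lt with hx | hx
  · simpa [← hx] using vecNorm_mulVec_le_frobNorm_mul A x
  have hunit : vecNorm ((vecNorm x)⁻¹ • x) ≤ 1 := by
    rw [vecNorm_smul, abs_inv, abs_of_pos hx, inv_mul_cancel₀ hx.ne']
  have h := vecNorm_mulVec_le_normOnOrthogonal (A := A) hunit
    (by rw [dotProduct_smul, hvx, smul_zero])
  rwa [mulVec_smul, vecNorm_smul, abs_inv, abs_of_pos hx, inv_mul_le_iff₀ hx, mul_comm] at h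

lemma vecNorm_mulVec_le_specNorm_mul (A : Matrix α β ℝ) (x : β → ℝ) :
    vecNorm (A *ᵥ x) ≤ specNorm A * vecNorm x := by
  rw [specNorm_eq_normOnOrthogonal_zero]
  exact vecNorm_mulVec_le_normOnOrthogonal_mul (zero_dotProduct x)

/-- Min-max: every `v⊥` contains `x` or meets `span {x, u}` in some `y ≠ 0`; since `A x ⊥ A u`
and `A` stretches `u` at least as much as `x`, there `‖A y‖ / ‖y‖ ≥ ‖A x‖ / ‖x‖`. -/
lemma vecNorm_mulVec_le_sigma2_mul (A : Matrix α β ℝ) {u x : β → ℝ} (hu : 0 < u ⬝ᵥ u)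
    (hxu : x ⬝ᵥ u = 0) (hAxu : A *ᵥ x ⬝ᵥ A *ᵥ u = 0)
    (hle : (A *ᵥ x ⬝ᵥ A *ᵥ x) * (u ⬝ᵥ u) ≤ (A *ᵥ u ⬝ᵥ A *ᵥ u) * (x ⬝ᵥ x)) :
    vecNorm (A *ᵥ x) ≤ sigma2 A * vecNorm x := by
  rw [sigma2_eq_iInf_normOnOrthogonal, Real.iInf_mul_of_nonneg (vecNorm_nonneg x)]
  refine le_ciInf fun v => ?_
  set a := v ⬝ᵥ u
  set b := v ⬝ᵥ x
  set y := a • x - b • u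
  have hvy : v ⬝ᵥ y = 0 := by
    simp only [y, dotProduct_sub, dotProduct_smul, smul_eq_mul, a, b]
    ring
  have hyy : y ⬝ᵥ y = a ^ 2 * (x ⬝ᵥ x) + b ^ 2 * (u ⬝ᵥ u) := by
    simp only [y, dotProduct_sub, sub_dotProduct, dotProduct_smul, smul_dotProduct, smul_eq_mul,
      dotProduct_comm u x, hxu]
    ring
  have hAyy : A *ᵥ y ⬝ᵥ A *ᵥ y = a ^ 2 * (A *ᵥ x ⬝ᵥ A *ᵥ x) + b ^ 2 * (A *ᵥ u ⬝ᵥ A *ᵥ u) := by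
    simp only [y, mulVec_sub, mulVec_smul, dotProduct_sub, sub_dotProduct, dotProduct_smul,
      smul_dotProduct, smul_eq_mul, dotProduct_comm (A *ᵥ u) (A *ᵥ x), hAxu]
    ring
  rcases (dotProduct_self_nonneg y).eq_or_lt with hy | hy
  · have hb : b ^ 2 * (u ⬝ᵥ u) = 0 := by
      nlinarith [mul_nonneg (sq_nonneg a) (dotProduct_self_nonneg x),
        mul_nonneg (sq_nonneg b) hu.le]
    replace hb : b = 0 := by simpa [hu.ne'] using hb
    exact vecNorm_mulVec_le_normOnOrthogonal_mul hb
  have hratio : vecNorm (A *ᵥ x) * vecNorm y ≤ vecNorm (A *ᵥ y) * vecNorm x := by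
    simp only [vecNorm_eq_sqrt_dotProduct, ← Real.sqrt_mul (dotProduct_self_nonneg _)]
    refine Real.sqrt_le_sqrt ?_
    rw [hyy, hAyy]
    nlinarith [mul_le_mul_of_nonneg_left hle (sq_nonneg b)]
  have hy' : 0 < vecNorm y := by rw [vecNorm_eq_sqrt_dotProduct]; exact Real.sqrt_pos.2 hy
  have hAy := vecNorm_mulVec_le_normOnOrthogonal_mul (A := A) hvy
  refine le_of_mul_le_mul_right ?_ hy'
  calc vecNorm (A *ᵥ x) * vecNorm y ≤ vecNorm (A *ᵥ y) * vecNorm x := hratio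
    _ ≤ normOnOrthogonal A v * vecNorm y * vecNorm x :=
      mul_le_mul_of_nonneg_right hAy (vecNorm_nonneg x)
    _ = normOnOrthogonal A v * vecNorm x * vecNorm y := by ring

end SingularValues

section ConstantLineSums

variable {ι : Type*} [Fintype ι] [Nonempty ι] {A : Matrix ι ι ℝ} {c : ℝ}

lemma vecNorm_mulVec_le_sigma2_mul_of_sum_eq_zero (hspec : specNorm A = c)
    (hrow : A *ᵥ (fun _ => 1) = fun _ => c) (hcol : (fun _ => 1) ᵥ* A = fun _ => c)
    {x : ι → ℝ} (hx : ∑ i, x i = 0) : vecNorm (A *ᵥ x) ≤ sigma2 A * vecNorm x := by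
  have hconst : (fun _ : ι => c) = c • fun _ => (1 : ℝ) := by ext; simp
  have hxu : x ⬝ᵥ (fun _ => 1) = 0 := by simpa [dotProduct] using hx
  have hAx : A *ᵥ x ⬝ᵥ A *ᵥ x ≤ c ^ 2 * (x ⬝ᵥ x) := by
    rw [← vecNorm_sq, ← vecNorm_sq, ← mul_pow, ← hspec]
    exact pow_le_pow_left₀ (vecNorm_nonneg _) (vecNorm_mulVec_le_specNorm_mul A x) 2
  refine vecNorm_mulVec_le_sigma2_mul A (u := fun _ => 1)
    (by rw [ones_dotProduct_ones]; exact_mod_cast Fintype.card_pos) hxu ?_ ?_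
  · rw [hrow, dotProduct_comm, hconst, smul_dotProduct, dotProduct_mulVec, hcol, hconst,
      smul_dotProduct, dotProduct_comm, hxu, smul_zero, smul_zero]
  · rw [hrow, hconst, smul_dotProduct, dotProduct_smul, ones_dotProduct_ones]
    simp only [smul_eq_mul]
    nlinarith [mul_le_mul_of_nonneg_right hAx (Nat.cast_nonneg (Fintype.card ι) : (0 : ℝ) ≤ _)]

/-- `(A - (c / |ι|) 𝟙𝟙ᵀ) w = A (w - mean w)`, and centring `w` does not increase its norm. -/
lemma vecNorm_centered_mulVec_le_sigma2_mul (hspec : specNorm A = c)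
    (hrow : A *ᵥ (fun _ => 1) = fun _ => c) (hcol : (fun _ => 1) ᵥ* A = fun _ => c)
    (w : ι → ℝ) :
    vecNorm ((A - (c / Fintype.card ι) • of 1) *ᵥ w) ≤ sigma2 A * vecNorm w := by
  set N : ℝ := (Fintype.card ι : ℝ)
  have hN : 0 < N := Nat.cast_pos.2 Fintype.card_pos
  set m := (∑ i, w i) / N
  have hsum : ∑ i, w i = N * m := (mul_div_cancel₀ _ hN.ne').symm
  have hAm : A *ᵥ (fun _ => m) = fun _ => c * m := by
    rw [show (fun _ : ι => m) = m • fun _ => (1 : ℝ) by ext; simp, mulVec_smul, hrow]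
    ext; simp [mul_comm]
  set w₀ : ι → ℝ := w - fun _ => m
  have hcenter : (A - (c / N) • of 1) *ᵥ w = A *ᵥ w₀ := by
    rw [sub_mulVec, mulVec_sub, hAm, smul_mulVec]
    ext i
    simp only [Pi.sub_apply, mulVec, dotProduct, Pi.smul_apply, of_apply, Pi.one_apply, one_mul,
      hsum, smul_eq_mul, sub_right_inj]
    field_simp
  have hw₀ : ∑ i, w₀ i = 0 := by
    simp [w₀, Finset.sum_sub_distrib, hsum, N]
  have hnorm : vecNorm w₀ ≤ vecNorm w := by
    rw [vecNorm_le_vecNorm_iff]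
    simp only [w₀, dotProduct, Pi.sub_apply, sub_mul, mul_sub, Finset.sum_sub_distrib,
      ← Finset.sum_mul, ← Finset.mul_sum, hsum, Finset.sum_const, Finset.card_univ, nsmul_eq_mul]
    nlinarith [mul_nonneg hN.le (sq_nonneg m)]
  rw [hcenter]
  exact (vecNorm_mulVec_le_sigma2_mul_of_sum_eq_zero hspec hrow hcol hw₀).trans
    (mul_le_mul_of_nonneg_left hnorm (sigma2_nonneg A))

end ConstantLineSums

section Frobenius

variable {α β γ κ : Type*} [Fintype α] [Fintype β] [Fintype γ] [Fintype κ]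

lemma frobNorm_sq (A : Matrix α β ℝ) : frobNorm A ^ 2 = ∑ i, ∑ j, A i j ^ 2 :=
  Real.sq_sqrt (by positivity)

lemma frobNorm_sq_eq_trace (A : Matrix α β ℝ) : frobNorm A ^ 2 = trace (Aᵀ * A) := by
  rw [frobNorm_sq, Finset.sum_comm]
  simp [trace, mul_apply, sq]

lemma frobNorm_smul (c : ℝ) (A : Matrix α β ℝ) : frobNorm (c • A) = |c| * frobNorm A := by
  simp only [frobNorm, Matrix.smul_apply, smul_eq_mul, mul_pow, ← Finset.mul_sum,
    Real.sqrt_mul (sq_nonneg c), Real.sqrt_sq_eq_abs]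

lemma frobNorm_mul_transpose_of_orthonormal [DecidableEq γ] {V : Matrix β γ ℝ} (hV : Vᵀ * V = 1)
    (B : Matrix α γ ℝ) : frobNorm (B * Vᵀ) = frobNorm B := by
  refine (sq_eq_sq₀ (frobNorm_nonneg _) (frobNorm_nonneg _)).1 ?_
  rw [frobNorm_sq_eq_trace, frobNorm_sq_eq_trace, transpose_mul, transpose_transpose,
    Matrix.mul_assoc, trace_mul_comm]
  simp only [Matrix.mul_assoc, hV, Matrix.mul_one]

lemma frobNorm_one_sub_mul_transpose_mul_le [DecidableEq α] [DecidableEq κ] {U : Matrix α κ ℝ}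
    (hU : Uᵀ * U = 1) (D : Matrix α β ℝ) : frobNorm ((1 - U * Uᵀ) * D) ≤ frobNorm D := by
  have hUU : ∀ Y : Matrix κ β ℝ, Uᵀ * (U * Y) = Y := fun Y => by
    rw [← Matrix.mul_assoc, hU, Matrix.one_mul]
  have hgram : ((1 - U * Uᵀ) * D)ᵀ * ((1 - U * Uᵀ) * D) = Dᵀ * D - (Uᵀ * D)ᵀ * (Uᵀ * D) := by
    simp only [transpose_mul, transpose_sub, transpose_transpose, Matrix.sub_mul,
      Matrix.mul_sub, Matrix.one_mul, Matrix.mul_assoc, hUU]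
    abel
  refine (sq_le_sq₀ (frobNorm_nonneg _) (frobNorm_nonneg _)).1 ?_
  rw [frobNorm_sq_eq_trace, hgram, trace_sub, ← frobNorm_sq_eq_trace, ← frobNorm_sq_eq_trace]
  exact sub_le_self _ (sq_nonneg _)

end Frobenius

lemma hadamard_mul_transpose_mul_apply {α β γ κ : Type*} [Fintype β] [Fintype κ]
    (H : Matrix α β ℝ) (U : Matrix α κ ℝ) (X : Matrix β κ ℝ)
    (V : Matrix β γ ℝ) (i : α) (k : γ) :
    ((H ⊙ (U * Xᵀ)) * V) i k = ∑ a, U i a * (H *ᵥ fun j => X j a * V j k) i := by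
  simp only [mul_apply, hadamard_apply, transpose_apply, mulVec, dotProduct, Finset.mul_sum,
    Finset.sum_mul]
  rw [Finset.sum_comm]
  exact Finset.sum_congr rfl fun _ _ => Finset.sum_congr rfl fun _ _ => by ring

lemma frobNorm_hadamard_mul_sq_le {α β γ κ : Type*} [Fintype α] [Fintype β] [Fintype γ]
    [Fintype κ] {H : Matrix α β ℝ} {U : Matrix α κ ℝ} {V : Matrix β γ ℝ} {μ ν s : ℝ}
    (hμ : 0 ≤ μ) (hU : ∀ i, ∑ a, U i a ^ 2 ≤ μ) (hV : ∀ j, ∑ k, V j k ^ 2 ≤ ν)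
    (hH : ∀ w, vecNorm (H *ᵥ w) ≤ s * vecNorm w) (X : Matrix β κ ℝ) :
    frobNorm ((H ⊙ (U * Xᵀ)) * V) ^ 2 ≤ μ * ν * s ^ 2 * frobNorm X ^ 2 := by
  set w : κ → γ → β → ℝ := fun a k j => X j a * V j k
  have hH2 : ∀ a k, ∑ i, (H *ᵥ w a k) i ^ 2 ≤ s ^ 2 * ∑ j, w a k j ^ 2 := fun a k => by
    rw [← vecNorm_sq_eq_sum, ← vecNorm_sq_eq_sum, ← mul_pow]
    exact pow_le_pow_left₀ (vecNorm_nonneg _) (hH (w a k)) 2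
  have hentry : ∀ i k, ((H ⊙ (U * Xᵀ)) * V) i k ^ 2 ≤ μ * ∑ a, (H *ᵥ w a k) i ^ 2 := by
    intro i k
    rw [hadamard_mul_transpose_mul_apply]
    exact (Finset.sum_mul_sq_le_sq_mul_sq _ _ _).trans
      (mul_le_mul_of_nonneg_right (hU i) (by positivity))
  rw [frobNorm_sq, frobNorm_sq]
  calc ∑ i, ∑ k, ((H ⊙ (U * Xᵀ)) * V) i k ^ 2
      ≤ ∑ i, ∑ k, μ * ∑ a, (H *ᵥ w a k) i ^ 2 := by gcongr with i _ k _; exact hentry i k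
    _ = μ * ∑ k, ∑ a, ∑ i, (H *ᵥ w a k) i ^ 2 := by
      simp only [← Finset.mul_sum]
      rw [Finset.sum_comm]
      exact congrArg _ (Finset.sum_congr rfl fun _ _ => Finset.sum_comm)
    _ ≤ μ * ∑ k, ∑ a, s ^ 2 * ∑ j, w a k j ^ 2 := by gcongr with k _ a _; exact hH2 a k
    _ = μ * s ^ 2 * ∑ j, ∑ a, X j a ^ 2 * ∑ k, V j k ^ 2 := by
      simp only [w, mul_pow, Finset.mul_sum, mul_assoc]
      rw [Finset.sum_comm]
      exact (Finset.sum_congr rfl fun _ _ => Finset.sum_comm).trans Finset.sum_comm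
    _ ≤ μ * s ^ 2 * ∑ j, ∑ a, X j a ^ 2 * ν := by gcongr with j _ a _; exact hV j
    _ = μ * ν * s ^ 2 * ∑ j, ∑ a, X j a ^ 2 := by
      simp only [← Finset.sum_mul]; ring

lemma sampl_eq_biadj_hadamard {n : ℕ} (Ω : Finset (Fin n × Fin n))
    (M : Matrix (Fin n) (Fin n) ℝ) : sampl Ω M = biadj Ω ⊙ M := by
  ext i j
  by_cases h : (i, j) ∈ Ω <;> simp [sampl, biadj, h]

lemma one_sub_mul_transpose_mul_mul_eq_zero {α κ β : Type*} [Fintype α] [Fintype κ]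
    [DecidableEq α] [DecidableEq κ] {U : Matrix α κ ℝ} (hU : Uᵀ * U = 1) (Y : Matrix κ β ℝ) :
    (1 - U * Uᵀ) * (U * Y) = 0 := by
  rw [Matrix.sub_mul, Matrix.one_mul, Matrix.mul_assoc, ← Matrix.mul_assoc Uᵀ, hU,
    Matrix.one_mul, sub_self]

theorem stmt_9_general {n d r : ℕ} (hn : 0 < n) {C μ₀ : ℝ}
    (U V : Matrix (Fin n) (Fin r) ℝ) (hU : Uᵀ * U = 1) (hV : Vᵀ * V = 1)
    (hA1U : IncoherentRows U μ₀) (hA1V : IncoherentRows V μ₀)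
    (Ω : Finset (Fin n × Fin n))
    (hG1 : AssumptionG1 Ω d) (hG2 : AssumptionG2 Ω d C) :
    ∀ X : Matrix (Fin n) (Fin r) ℝ,
      frobNorm ((1 - U * Uᵀ) * (((n : ℝ) / (d : ℝ)) • sampl Ω (U * Xᵀ)) * (V * Vᵀ)) ^ 2 ≤
        C ^ 2 * μ₀ ^ 2 * r ^ 2 / d * frobNorm X ^ 2 := by
  intro X
  obtain ⟨hspec, hrow, hcol⟩ := hG1
  have : Nonempty (Fin n) := ⟨⟨0, hn⟩⟩
  set H := biadj Ω - ((d : ℝ) / Fintype.card (Fin n)) • of 1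
  have hμ : 0 ≤ μ₀ * r / n :=
    (Finset.sum_nonneg fun a _ => sq_nonneg (U ⟨0, hn⟩ a)).trans (hA1U ⟨0, hn⟩)
  have hσ : sigma2 (biadj Ω) ^ 2 ≤ C ^ 2 * d := by
    calc sigma2 (biadj Ω) ^ 2 ≤ (C * √d) ^ 2 := pow_le_pow_left₀ (sigma2_nonneg _) hG2 2
      _ = C ^ 2 * d := by rw [mul_pow, Real.sq_sqrt (Nat.cast_nonneg d)]
  have hsampl : (1 - U * Uᵀ) * sampl Ω (U * Xᵀ) = (1 - U * Uᵀ) * (H ⊙ (U * Xᵀ)) := by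
    have hsplit : biadj Ω = H + ((d : ℝ) / Fintype.card (Fin n)) • of 1 :=
      (sub_add_cancel _ _).symm
    rw [sampl_eq_biadj_hadamard, hsplit, add_hadamard, smul_hadamard, of_one_hadamard,
      Matrix.mul_add, Matrix.mul_smul, one_sub_mul_transpose_mul_mul_eq_zero hU, smul_zero,
      add_zero]
  have hHX := frobNorm_hadamard_mul_sq_le hμ hA1U hA1V
    (vecNorm_centered_mulVec_le_sigma2_mul hspec hrow hcol) X
  calc frobNorm ((1 - U * Uᵀ) * (((n : ℝ) / (d : ℝ)) • sampl Ω (U * Xᵀ)) * (V * Vᵀ)) ^ 2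
      = ((n : ℝ) / d) ^ 2 * frobNorm ((1 - U * Uᵀ) * ((H ⊙ (U * Xᵀ)) * V) * Vᵀ) ^ 2 := by
        rw [Matrix.mul_smul, Matrix.smul_mul, frobNorm_smul, hsampl, mul_pow, sq_abs]
        simp only [Matrix.mul_assoc]
    _ ≤ ((n : ℝ) / d) ^ 2 * frobNorm ((H ⊙ (U * Xᵀ)) * V) ^ 2 := by
        rw [frobNorm_mul_transpose_of_orthonormal hV]
        gcongr
        exacts [frobNorm_nonneg _, frobNorm_one_sub_mul_transpose_mul_le hU _]
    _ ≤ ((n : ℝ) / d) ^ 2 *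
          ((μ₀ * r / n) * (μ₀ * r / n) * sigma2 (biadj Ω) ^ 2 * frobNorm X ^ 2) := by
        gcongr
    _ ≤ ((n : ℝ) / d) ^ 2 * ((μ₀ * r / n) * (μ₀ * r / n) * (C ^ 2 * d) * frobNorm X ^ 2) := by
        gcongr
    _ = C ^ 2 * μ₀ ^ 2 * r ^ 2 / d * frobNorm X ^ 2 := by
        field_simp

/-- `‖(I − UUᵀ)(n/d)P_Ω(UXᵀ)VVᵀ‖_F² ≤ (C²μ₀²r²/d)·‖X‖_F²`. -/
theorem stmt_9 {n d r : ℕ} (hn : 0 < n) (hd : 0 < d) (hr : 0 < r) {C μ₀ : ℝ} (hC : 0 < C)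
    (U V : Matrix (Fin n) (Fin r) ℝ) (hU : Uᵀ * U = 1) (hV : Vᵀ * V = 1)
    (hA1U : IncoherentRows U μ₀) (hA1V : IncoherentRows V μ₀)
    (Ω : Finset (Fin n × Fin n)) (hreg : RegularSampling Ω d)
    (hG1 : AssumptionG1 Ω d) (hG2 : AssumptionG2 Ω d C) :
    ∀ X : Matrix (Fin n) (Fin r) ℝ,
      frobNorm ((1 - U * Uᵀ) * (((n : ℝ) / (d : ℝ)) • sampl Ω (U * Xᵀ)) * (V * Vᵀ)) ^ 2 ≤
        C ^ 2 * μ₀ ^ 2 * r ^ 2 / d * frobNorm X ^ 2 :=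
  stmt_9_general hn U V hU hV hA1U hA1V Ω hG1 hG2
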